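/- Let X and Y be Banach spaces, 1 < p < ∞, x ∈ X \ {0}, y ∈ Y \ {0}. If (x, y) is a semi denting point of B_{X ⊕_p Y}, then x/‖x‖ is a semi denting point of B_X and y/‖y‖ is a semi denting point of B_Y. -/

import Mathlib

/-- A point `x₀` of the closed unit ball of `Z` is a *semi denting point* of `B_Z` if for every
`ε > 0` there is a slice `S(B_Z, f, δ) = {z ∈ B_Z : f z > ‖f‖ - δ}` contained in `B(x₀, ε)`. -/
def IsSemiDentingPointOfBall {Z : Type*} [NormedAddCommGroup Z] [NormedSpace ℝ Z] (x : Z) :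
    Prop :=
  ‖x‖ ≤ 1 ∧ ∀ ε > (0 : ℝ), ∃ (f : Z →L[ℝ] ℝ) (δ : ℝ), 0 < δ ∧
    {z : Z | ‖z‖ ≤ 1 ∧ f z > ‖f‖ - δ} ⊆ Metric.closedBall x ε

/-! If a slice `S(f, δ)` of `B_{X ⊕_p Y}` lies in the `η`-ball around `(x, y)`, pick `(a, b)` in
`S(f, δ/2)`. For `u` in the slice of `B_X` cut out by `g = f(·, 0)` at depth `δ/2`, the point
`(‖a‖u, b)` still lies in `B_{X ⊕_p Y}` and in `S(f, δ)`, so both `a` and `‖a‖u` are `η`-close to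
`x`, whence `u` is `2η/‖x‖`-close to `x/‖x‖`. The second factor follows by swapping coordinates. -/

open Metric
open WithLp (toLp)

section Slice

variable {E F : Type*} [NormedAddCommGroup E] [NormedSpace ℝ E]
  [NormedAddCommGroup F] [NormedSpace ℝ F]

def unitBallSlice (f : E →L[ℝ] ℝ) (δ : ℝ) : Set E := {z | ‖z‖ ≤ 1 ∧ f z > ‖f‖ - δ}

lemma unitBallSlice_mono (f : E →L[ℝ] ℝ) {δ δ' : ℝ} (h : δ ≤ δ') :
    unitBallSlice f δ ⊆ unitBallSlice f δ' :=
  fun _ ⟨hz, hfz⟩ => ⟨hz, by linarith⟩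

lemma unitBallSlice_nonempty (f : E →L[ℝ] ℝ) {δ : ℝ} (hδ : 0 < δ) :
    (unitBallSlice f δ).Nonempty := by
  obtain ⟨z, hz, hfz⟩ := f.exists_lt_apply_of_lt_opNorm (sub_lt_self ‖f‖ hδ)
  rcases lt_abs.1 hfz with hfz | hfz
  · exact ⟨z, hz.le, hfz⟩
  · exact ⟨-z, by simpa using hz.le, by simpa using hfz⟩

lemma IsSemiDentingPointOfBall.map {x : E} (h : IsSemiDentingPointOfBall x) (e : E ≃ₗᵢ[ℝ] F) :
    IsSemiDentingPointOfBall (e x) := by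
  refine ⟨by simpa using h.1, fun ε hε => ?_⟩
  obtain ⟨f, δ, hδ, hS⟩ := h.2 ε hε
  refine ⟨f.comp (e.symm : F →L[ℝ] E), δ, hδ, ?_⟩
  rintro z ⟨hz, hfz⟩
  rw [f.opNorm_comp_linearIsometryEquiv] at hfz
  have : e.symm z ∈ closedBall x ε := hS ⟨by simpa using hz, hfz⟩
  simpa [← e.symm.dist_map] using this

end Slice

lemma norm_sub_inv_norm_smul_le {E : Type*} [NormedAddCommGroup E] [NormedSpace ℝ E]
    {x a u : E} {η : ℝ} (hx : x ≠ 0) (hu : ‖u‖ ≤ 1) (ha : ‖a - x‖ ≤ η)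
    (hau : ‖‖a‖ • u - x‖ ≤ η) : ‖u - ‖x‖⁻¹ • x‖ ≤ 2 * η / ‖x‖ := by
  have hx' : 0 < ‖x‖ := norm_pos_iff.2 hx
  have hnorm : |‖x‖ - ‖a‖| ≤ η := (abs_norm_sub_norm_le x a).trans (norm_sub_rev x a ▸ ha)
  have key : ‖x‖ • (u - ‖x‖⁻¹ • x) = (‖x‖ - ‖a‖) • u + (‖a‖ • u - x) := by
    rw [smul_sub, smul_inv_smul₀ hx'.ne']
    module
  rw [le_div_iff₀ hx', mul_comm, ← norm_smul_of_nonneg hx'.le, key]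
  calc ‖(‖x‖ - ‖a‖) • u + (‖a‖ • u - x)‖
      ≤ |‖x‖ - ‖a‖| * ‖u‖ + η := by
        grw [norm_add_le, norm_smul, Real.norm_eq_abs, hau]
    _ ≤ 2 * η := by nlinarith [abs_nonneg (‖x‖ - ‖a‖)]

namespace WithLp

lemma prod_norm_toLp_le_of_norm_fst_le {p : ENNReal} [Fact (1 ≤ p)] {X Y : Type*}
    [SeminormedAddCommGroup X] [SeminormedAddCommGroup Y] {a a' : X} (b : Y) (h : ‖a'‖ ≤ ‖a‖) :
    ‖toLp p (a', b)‖ ≤ ‖toLp p (a, b)‖ := by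
  rcases p.dichotomy with rfl | hp
  · simpa [prod_norm_eq_sup] using sup_le_sup_right h _
  · have hp : 0 < p.toReal := zero_lt_one.trans_le hp
    simp only [prod_norm_eq_add hp]
    gcongr
    exacts [h, le_rfl]

variable (p : ENNReal) (X Y : Type*) [NormedAddCommGroup X] [NormedSpace ℝ X]
  [NormedAddCommGroup Y] [NormedSpace ℝ Y]

def inlL : X →L[ℝ] WithLp p (X × Y) :=
  (prodContinuousLinearEquiv p ℝ X Y).symm.toContinuousLinearMap.comp (.inl ℝ X Y)

@[simp]
lemma inlL_apply (u : X) : inlL p X Y u = toLp p (u, 0) := rfl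

end WithLp

section Prod

variable {p : ENNReal} [Fact (1 ≤ p)] {X Y : Type*} [NormedAddCommGroup X] [NormedSpace ℝ X]
  [NormedAddCommGroup Y] [NormedSpace ℝ Y]

lemma toLp_norm_smul_mem_unitBallSlice {f : WithLp p (X × Y) →L[ℝ] ℝ} {δ : ℝ} (hδ : 0 ≤ δ)
    {a u : X} {b : Y} (hab : toLp p (a, b) ∈ unitBallSlice f (δ / 2))
    (hu : u ∈ unitBallSlice (f.comp (WithLp.inlL p X Y)) (δ / 2)) :
    toLp p (‖a‖ • u, b) ∈ unitBallSlice f δ := by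
  set g := f.comp (WithLp.inlL p X Y)
  obtain ⟨hab_norm, hfab⟩ := hab
  obtain ⟨hu_norm, hgu⟩ := hu
  have hsplit : ∀ c : X, f (toLp p (c, b)) = g c + f (toLp p (0, b)) := fun c => by
    change _ = f (toLp p (c, 0)) + _
    rw [← map_add, ← WithLp.toLp_add, Prod.mk_add_mk, add_zero, zero_add]
  have ha : ‖a‖ ≤ 1 := (WithLp.norm_fst_le X _).trans hab_norm
  have hga : g a ≤ ‖g‖ * ‖a‖ := (le_abs_self _).trans (g.le_opNorm a)
  refine ⟨?_, ?_⟩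
  · refine (WithLp.prod_norm_toLp_le_of_norm_fst_le b ?_).trans hab_norm
    rw [norm_smul, norm_norm]
    exact mul_le_of_le_one_right (norm_nonneg a) hu_norm
  · rw [hsplit, map_smul, smul_eq_mul]
    rw [hsplit] at hfab
    nlinarith [mul_le_mul_of_nonneg_left hgu.le (norm_nonneg a)]

theorem IsSemiDentingPointOfBall.inv_norm_smul_fst {x : X} {y : Y} (hx : x ≠ 0)
    (h : IsSemiDentingPointOfBall (toLp p (x, y))) : IsSemiDentingPointOfBall (‖x‖⁻¹ • x) := by
  refine ⟨(norm_smul_inv_norm hx).le, fun ε hε => ?_⟩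
  have hx' : 0 < ‖x‖ := norm_pos_iff.2 hx
  obtain ⟨f, δ, hδ, hS⟩ := h.2 (ε * ‖x‖ / 2) (by positivity)
  obtain ⟨⟨a, b⟩, hab⟩ := unitBallSlice_nonempty f (half_pos hδ)
  refine ⟨f.comp (WithLp.inlL p X Y), δ / 2, half_pos hδ, fun u hu => ?_⟩
  have ha : ‖a - x‖ ≤ ε * ‖x‖ / 2 := (WithLp.norm_fst_le X _).trans <|
    mem_closedBall_iff_norm.1 (hS (unitBallSlice_mono f (by linarith) hab))
  have hau : ‖‖a‖ • u - x‖ ≤ ε * ‖x‖ / 2 := (WithLp.norm_fst_le X _).trans <|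
    mem_closedBall_iff_norm.1 (hS (toLp_norm_smul_mem_unitBallSlice hδ.le hab hu))
  rw [mem_closedBall_iff_norm]
  calc ‖u - ‖x‖⁻¹ • x‖ ≤ 2 * (ε * ‖x‖ / 2) / ‖x‖ := norm_sub_inv_norm_smul_le hx hu.1 ha hau
    _ = ε := by field_simp

end Prod

theorem isSemiDentingPointOfBall_of_prod_general
    {X Y : Type*} [NormedAddCommGroup X] [NormedSpace ℝ X]
    [NormedAddCommGroup Y] [NormedSpace ℝ Y]
    (p : ENNReal) [Fact (1 ≤ p)]
    (x : X) (y : Y) (hx : x ≠ 0) (hy : y ≠ 0)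
    (h : IsSemiDentingPointOfBall ((WithLp.equiv p (X × Y)).symm (x, y))) :
    IsSemiDentingPointOfBall (‖x‖⁻¹ • x) ∧ IsSemiDentingPointOfBall (‖y‖⁻¹ • y) :=
  ⟨h.inv_norm_smul_fst hx,
    (h.map (LinearIsometryEquiv.withLpProdComm p ℝ X Y)).inv_norm_smul_fst hy⟩

/-- For Banach spaces `X`, `Y`, `1 < p < ∞`, `x ≠ 0`, `y ≠ 0`: if `(x, y)` is a semi denting
point of `B_{X ⊕_p Y}`, then `x/‖x‖` is a semi denting point of `B_X` and `y/‖y‖` is a semi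
denting point of `B_Y`. -/
theorem isSemiDentingPointOfBall_of_prod
    {X Y : Type*} [NormedAddCommGroup X] [NormedSpace ℝ X] [CompleteSpace X]
    [NormedAddCommGroup Y] [NormedSpace ℝ Y] [CompleteSpace Y]
    (p : ENNReal) [Fact (1 ≤ p)] (hp1 : 1 < p) (hp : p ≠ ⊤)
    (x : X) (y : Y) (hx : x ≠ 0) (hy : y ≠ 0)
    (h : IsSemiDentingPointOfBall ((WithLp.equiv p (X × Y)).symm (x, y))) :
    IsSemiDentingPointOfBall (‖x‖⁻¹ • x) ∧ IsSemiDentingPointOfBall (‖y‖⁻¹ • y) :=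
  isSemiDentingPointOfBall_of_prod_general p x y hx hy h
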